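/- arXiv:1905.05244 — 2 statements merged into one kernel-verified Lean document; each statement's English description precedes it below -/
import Mathlib

section
/- Consider the one-dimensional recursion z_{n+1} = z_n(b + z_n)/(φ(k y(b + z_n) + ν z_n) + b + z_n) with constants b ≥ 0, φ > 0, ν > 0, k ≥ 0, y ≥ 0 and z₀ > 0 (if b = 0 assume interpretations at z = 0 give 0). Then (z_n) is nonincreasing and converges to 0 whenever k y > 0. -/
theorem stmt_11 (b φ ν k y : ℝ)
    (hb : 0 ≤ b) (hφ : 0 < φ) (hν : 0 < ν) (hk : 0 ≤ k) (hy : 0 ≤ y)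
    (z : ℕ → ℝ) (hz0 : 0 < z 0)
    (hrec : ∀ n, z (n + 1) =
      z n * (b + z n) / (φ * (k * y * (b + z n) + ν * z n) + b + z n)) :
    (∀ n, z (n + 1) ≤ z n) ∧
    (0 < k * y → Filter.Tendsto z Filter.atTop (nhds 0)) := by
  have hpos : ∀ n, 0 < z n := by
    intro n
    induction n with
    | zero => exact hz0
    | succ n ih =>
      rw [hrec n]
      have hbz : 0 < b + z n := by linarith
      have h0 : 0 ≤ φ * (k * y * (b + z n) + ν * z n) := by positivity
      have hden : 0 < φ * (k * y * (b + z n) + ν * z n) + b + z n := by linarith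
      positivity
  have hmono : ∀ n, z (n + 1) ≤ z n := by
    intro n
    have hz := hpos n
    have hbz : 0 < b + z n := by linarith
    have h0 : 0 ≤ φ * (k * y * (b + z n) + ν * z n) := by positivity
    rw [hrec n, div_le_iff₀ (by linarith)]
    nlinarith
  refine ⟨hmono, fun hky => ?_⟩
  have h1 : (1:ℝ) < 1 + φ * (k * y) := by nlinarith
  set r : ℝ := 1 / (1 + φ * (k * y)) with hr
  have hrpos : 0 < r := by rw [hr]; positivity
  have hrlt : r < 1 := by
    rw [hr, div_lt_one (by linarith)]; linarith
  have hstep : ∀ n, z (n + 1) ≤ z n * r := by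
    intro n
    have hz := hpos n
    have hbz : 0 < b + z n := by linarith
    have h0 : 0 ≤ φ * (k * y * (b + z n) + ν * z n) := by positivity
    rw [hrec n, div_le_iff₀ (by linarith)]
    have hνz : 0 ≤ φ * (ν * z n) := by positivity
    have hrmul : r * (1 + φ * (k * y)) = 1 := by
      rw [hr]; field_simp
    have hid : z n * r * (φ * (k * y * (b + z n) + ν * z n) + b + z n)
        = z n * (b + z n) + z n * r * (φ * (ν * z n)) := by
      rw [hr]; field_simp; ring
    nlinarith [mul_nonneg (mul_nonneg hz.le hrpos.le) hνz]
  have hbound : ∀ n, z n ≤ z 0 * r ^ n := by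
    intro n
    induction n with
    | zero => simp
    | succ n ih =>
      calc z (n + 1) ≤ z n * r := hstep n
        _ ≤ z 0 * r ^ n * r := by nlinarith
        _ = z 0 * r ^ (n + 1) := by ring
  have htend : Filter.Tendsto (fun n => z 0 * r ^ n) Filter.atTop (nhds 0) := by
    have := (tendsto_pow_atTop_nhds_zero_of_lt_one hrpos.le hrlt).const_mul (z 0)
    simpa using this
  exact squeeze_zero (fun n => (hpos n).le) hbound htend
end

section
/- Let f : ℝ → ℝ be a C³ map with fixed point ξ, f'(ξ) = 1, f''(ξ) = 0, and f'''(ξ) < 0. Then ξ is an asymptotically stable fixed point of x_{n+1} = f(x_n): there is δ > 0 such that every orbit starting within δ of ξ converges to ξ. -/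
open Filter Set

/-- Auxiliary lemma: if `f` maps `(ξ, ξ+δ)` strictly toward `ξ` from the right,
then all orbits starting in `[ξ, ξ+δ)` converge to `ξ`. -/
lemma aux_right (f : ℝ → ℝ) (hc : Continuous f) (ξ δ : ℝ) (hδ : 0 < δ)
    (hfix : f ξ = ξ)
    (key : ∀ y, ξ < y → y < ξ + δ → ξ < f y ∧ f y < y) :
    ∀ x₀, ξ ≤ x₀ → x₀ < ξ + δ →
      Filter.Tendsto (fun n => f^[n] x₀) Filter.atTop (nhds ξ) := by
  intro x₀ h0 h1
  set a : ℕ → ℝ := fun n => f^[n] x₀ with ha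
  have hsucc : ∀ n, a (n + 1) = f (a n) := fun n =>
    Function.iterate_succ_apply' f n x₀
  have hmem : ∀ n, ξ ≤ a n ∧ a n ≤ x₀ := by
    intro n
    induction n with
    | zero => exact ⟨h0, le_refl _⟩
    | succ n ih =>
      rcases eq_or_lt_of_le ih.1 with h | h
      · rw [hsucc, ← h, hfix]
        exact ⟨le_refl _, h0⟩
      · have hk := key (a n) h (lt_of_le_of_lt ih.2 h1)
        rw [hsucc]
        exact ⟨hk.1.le, hk.2.le.trans ih.2⟩
  have hant : Antitone a := by
    apply antitone_nat_of_succ_le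
    intro n
    rcases eq_or_lt_of_le (hmem n).1 with h | h
    · rw [hsucc, ← h, hfix]
    · rw [hsucc]
      exact (key (a n) h (lt_of_le_of_lt (hmem n).2 h1)).2.le
  have hbdd : BddBelow (Set.range a) := ⟨ξ, by rintro _ ⟨n, rfl⟩; exact (hmem n).1⟩
  have hL : Filter.Tendsto a Filter.atTop (nhds (⨅ n, a n)) :=
    tendsto_atTop_ciInf hant hbdd
  set L := ⨅ n, a n with hLdef
  have hLξ : ξ ≤ L := le_ciInf fun n => (hmem n).1
  have hLx : L ≤ x₀ := by
    have := ciInf_le hbdd 0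
    simpa [a] using this
  have hfL : f L = L := by
    have t1 : Filter.Tendsto (fun n => f (a n)) Filter.atTop (nhds (f L)) :=
      (hc.continuousAt.tendsto).comp hL
    have t2 : Filter.Tendsto (fun n => a (n + 1)) Filter.atTop (nhds L) :=
      hL.comp (Filter.tendsto_add_atTop_nat 1)
    have : (fun n => f (a n)) = fun n => a (n + 1) := by
      funext n; rw [hsucc]
    rw [this] at t1
    exact tendsto_nhds_unique t1 t2
  have hLeq : L = ξ := by
    rcases eq_or_lt_of_le hLξ with h | h
    · exact h.symm
    · exfalso
      have := (key L h (lt_of_le_of_lt hLx h1)).2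
      rw [hfL] at this
      exact lt_irrefl _ this
  rw [hLeq] at hL
  exact hL

theorem stmt_15 (f : ℝ → ℝ) (hf : ContDiff ℝ 3 f) (ξ : ℝ)
    (hfix : f ξ = ξ) (h1 : deriv f ξ = 1) (h2 : deriv (deriv f) ξ = 0)
    (h3 : deriv (deriv (deriv f)) ξ < 0) :
    ∃ δ > 0, ∀ x₀ : ℝ, |x₀ - ξ| < δ →
      Filter.Tendsto (fun n => f^[n] x₀) Filter.atTop (nhds ξ) := by
  -- smoothness facts
  have hf2 : ContDiff ℝ 2 (deriv f) := by
    have h : ContDiff ℝ (2 + 1) f := by norm_num at hf ⊢; exact hf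
    exact (contDiff_succ_iff_deriv.mp h).2.2
  have hf3 : ContDiff ℝ 1 (deriv (deriv f)) := by
    have h : ContDiff ℝ (1 + 1) (deriv f) := by norm_num at hf2 ⊢; exact hf2
    exact (contDiff_succ_iff_deriv.mp h).2.2
  have hd1 : Differentiable ℝ f := hf.differentiable (by norm_num)
  have hd2 : Differentiable ℝ (deriv f) := hf2.differentiable (by norm_num)
  have hd3 : Differentiable ℝ (deriv (deriv f)) := hf3.differentiable (by norm_num)
  have hc1 : Continuous (deriv f) := hf2.continuous
  have hc2 : Continuous (deriv (deriv f)) := hf3.continuous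
  have hc3 : Continuous (deriv (deriv (deriv f))) :=
    (contDiff_one_iff_deriv.mp hf3).2
  -- get δ with sign conditions on the third derivative and the first derivative
  have e1 : ∀ᶠ x in nhds ξ, deriv (deriv (deriv f)) x < 0 := by
    have : IsOpen {x : ℝ | deriv (deriv (deriv f)) x < 0} :=
      isOpen_lt hc3 continuous_const
    exact this.mem_nhds h3
  have e2 : ∀ᶠ x in nhds ξ, 0 < deriv f x := by
    have : IsOpen {x : ℝ | 0 < deriv f x} := isOpen_lt continuous_const hc1
    exact this.mem_nhds (by simp [h1])
  have e12 := e1.and e2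
  rw [Metric.eventually_nhds_iff] at e12
  obtain ⟨δ, hδ, hball⟩ := e12
  have hball' : ∀ x, x ∈ Set.Ioo (ξ - δ) (ξ + δ) →
      deriv (deriv (deriv f)) x < 0 ∧ 0 < deriv f x := by
    intro x hx
    apply hball
    rw [Real.dist_eq, abs_sub_lt_iff]
    constructor <;> [linarith [hx.2]; linarith [hx.1]]
  have hξI : ξ ∈ Set.Ioo (ξ - δ) (ξ + δ) := by constructor <;> linarith
  -- g x = f x - x and its derivatives
  set g : ℝ → ℝ := fun x => f x - x with hg
  have hg1 : deriv g = fun x => deriv f x - 1 := by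
    funext x
    rw [hg]
    have : deriv (fun x => f x - x) x = deriv f x - deriv (fun x : ℝ => x) x :=
      deriv_sub (hd1 x) differentiable_id.differentiableAt
    rw [this, deriv_id'']
  have hg2 : deriv (deriv g) = deriv (deriv f) := by
    rw [hg1]; funext x; exact deriv_sub_const _
  -- second derivative of f is strictly antitone on the interval
  have s1 : StrictAntiOn (deriv (deriv f)) (Set.Ioo (ξ - δ) (ξ + δ)) := by
    apply strictAntiOn_of_deriv_neg (convex_Ioo _ _) hc2.continuousOn
    intro x hx
    rw [interior_Ioo] at hx
    exact (hball' x hx).1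
  have hf2R : ∀ x, ξ < x → x < ξ + δ → deriv (deriv f) x < 0 := by
    intro x hx1 hx2
    have := s1 hξI ⟨by linarith, hx2⟩ hx1
    rwa [h2] at this
  have hf2L : ∀ x, ξ - δ < x → x < ξ → 0 < deriv (deriv f) x := by
    intro x hx1 hx2
    have := s1 ⟨hx1, by linarith⟩ hξI hx2
    rwa [h2] at this
  -- deriv g < 0 on both punctured sides
  have hcg1 : Continuous (deriv g) := by rw [hg1]; exact hc1.sub continuous_const
  have hg1ξ : deriv g ξ = 0 := by rw [hg1]; simp [h1]
  have hgR : ∀ x, ξ < x → x < ξ + δ → deriv g x < 0 := by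
    intro x hx1 hx2
    have s2 : StrictAntiOn (deriv g) (Set.Ico ξ (ξ + δ)) := by
      apply strictAntiOn_of_deriv_neg (convex_Ico _ _) hcg1.continuousOn
      intro y hy
      rw [interior_Ico] at hy
      rw [hg2]
      exact hf2R y hy.1 hy.2
    have := s2 ⟨le_refl _, by linarith⟩ ⟨hx1.le, hx2⟩ hx1
    rwa [hg1ξ] at this
  have hgL : ∀ x, ξ - δ < x → x < ξ → deriv g x < 0 := by
    intro x hx1 hx2
    have s2 : StrictMonoOn (deriv g) (Set.Ioc (ξ - δ) ξ) := by
      apply strictMonoOn_of_deriv_pos (convex_Ioc _ _) hcg1.continuousOn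
      intro y hy
      rw [interior_Ioc] at hy
      rw [hg2]
      exact hf2L y hy.1 hy.2
    have := s2 ⟨hx1, hx2.le⟩ ⟨by linarith, le_refl _⟩ hx2
    rwa [hg1ξ] at this
  -- g < 0 on the right, g > 0 on the left
  have hcg : Continuous g := hd1.continuous.sub continuous_id
  have hgξ : g ξ = 0 := by rw [hg]; simp [hfix]
  have hgRneg : ∀ x, ξ < x → x < ξ + δ → f x < x := by
    intro x hx1 hx2
    have s3 : StrictAntiOn g (Set.Ico ξ (ξ + δ)) := by
      apply strictAntiOn_of_deriv_neg (convex_Ico _ _) hcg.continuousOn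
      intro y hy
      rw [interior_Ico] at hy
      exact hgR y hy.1 hy.2
    have := s3 ⟨le_refl _, by linarith⟩ ⟨hx1.le, hx2⟩ hx1
    rw [hgξ] at this
    have : f x - x < 0 := this
    linarith
  have hgLpos : ∀ x, ξ - δ < x → x < ξ → x < f x := by
    intro x hx1 hx2
    have s3 : StrictAntiOn g (Set.Ioc (ξ - δ) ξ) := by
      apply strictAntiOn_of_deriv_neg (convex_Ioc _ _) hcg.continuousOn
      intro y hy
      rw [interior_Ioc] at hy
      exact hgL y hy.1 hy.2
    have := s3 ⟨hx1, hx2.le⟩ ⟨by linarith, le_refl _⟩ hx2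
    rw [hgξ] at this
    have : (0 : ℝ) < f x - x := this
    linarith
  -- f is strictly monotone on the interval
  have smono : StrictMonoOn f (Set.Ioo (ξ - δ) (ξ + δ)) := by
    apply strictMonoOn_of_deriv_pos (convex_Ioo _ _) hd1.continuous.continuousOn
    intro x hx
    rw [interior_Ioo] at hx
    exact (hball' x hx).2
  have keyR : ∀ y, ξ < y → y < ξ + δ → ξ < f y ∧ f y < y := by
    intro y hy1 hy2
    refine ⟨?_, hgRneg y hy1 hy2⟩
    have := smono hξI ⟨by linarith, hy2⟩ hy1
    rwa [hfix] at this
  have keyL : ∀ y, ξ - δ < y → y < ξ → y < f y ∧ f y < ξ := by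
    intro y hy1 hy2
    refine ⟨hgLpos y hy1 hy2, ?_⟩
    have := smono ⟨hy1, by linarith⟩ hξI hy2
    rwa [hfix] at this
  refine ⟨δ, hδ, ?_⟩
  intro x₀ hx₀
  rw [abs_sub_lt_iff] at hx₀
  rcases le_or_gt ξ x₀ with h | h
  · exact aux_right f hd1.continuous ξ δ hδ hfix keyR x₀ h (by linarith [hx₀.1])
  · -- reflect: apply aux_right to x ↦ -f (-x) at fixed point -ξ
    set F : ℝ → ℝ := fun x => -f (-x) with hF
    have hFc : Continuous F := (hd1.continuous.comp continuous_neg).neg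
    have hFfix : F (-ξ) = -ξ := by simp [hF, hfix]
    have hFkey : ∀ y, -ξ < y → y < -ξ + δ → -ξ < F y ∧ F y < y := by
      intro y hy1 hy2
      have hz1 : ξ - δ < -y := by linarith
      have hz2 : -y < ξ := by linarith
      obtain ⟨k1, k2⟩ := keyL (-y) hz1 hz2
      constructor
      · simp only [hF]; linarith
      · simp only [hF]; linarith
    have hiter : ∀ n (x : ℝ), F^[n] (-x) = -(f^[n] x) := by
      intro n
      induction n with
      | zero => intro x; simp
      | succ n ih =>
        intro x
        rw [Function.iterate_succ_apply, Function.iterate_succ_apply]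
        have : F (-x) = -(f x) := by simp [hF]
        rw [this, ih]
    have := aux_right F hFc (-ξ) δ hδ hFfix hFkey (-x₀) (by linarith)
      (by linarith [hx₀.2])
    have h2 : Filter.Tendsto (fun n => -(f^[n] x₀)) Filter.atTop (nhds (-ξ)) := by
      convert this using 2
      rw [hiter]
    have := h2.neg
    simpa using this
end
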